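/- Let F, G be purposive discrete distributions with finite means. If F ≼_∧ G, then F ≤_dil G, i.e., E[φ(X - E[X])] ≤ E[φ(Y - E[Y])] for all convex φ : ℝ → ℝ for which the expectations exist, where X ~ F, Y ~ G. -/

import Mathlib

/-- A purposive discrete distribution: support indexed by an interval of `ℤ`
with at least two elements, strictly increasing support points `x` and
positive probabilities `p` summing to one. -/
structure DiscDist where
  A : Set ℤ
  x : ℤ → ℝ
  p : ℤ → ℝ
  hA2 : ∃ a b, a ∈ A ∧ b ∈ A ∧ a ≠ b
  hAconn : ∀ a b c : ℤ, a ∈ A → c ∈ A → a ≤ b → b ≤ c → b ∈ A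
  hmono : ∀ a b : ℤ, a ∈ A → b ∈ A → a < b → x a < x b
  hpos : ∀ a ∈ A, 0 < p a
  hzero : ∀ a ∉ A, p a = 0
  hsummable : Summable p
  hsum : ∑' a, p a = 1

/-- Cumulative probability strictly below index `a`, i.e. `F(x_{a-1})`. -/
noncomputable def DiscDist.L (D : DiscDist) (a : ℤ) : ℝ :=
  ∑' i : ℤ, if i < a then D.p i else 0

/-- The relation `a ▷◁ b`: the jump intervals `(F(x_{a-1}), F(x_a))` and
`(G(y_{b-1}), G(y_b))` intersect. -/
def DRel (F G : DiscDist) (a b : ℤ) : Prop :=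
  a ∈ F.A ∧ b ∈ G.A ∧
    max (F.L a) (G.L b) < min (F.L (a + 1)) (G.L (b + 1))

/-- The ∧-discrete dispersive order `F ≼_∧ G`. -/
def discoA (F G : DiscDist) : Prop :=
  (∀ a b, DRel F G a b → G.p b ≤ F.p a) ∧
  (∀ a b, DRel F G a b → DRel F G (a - 1) (b - 1) →
    F.x a - F.x (a - 1) ≤ G.x b - G.x (b - 1))

/-- The ∨-discrete dispersive order `F ≼_∨ G`. -/
def discoO (F G : DiscDist) : Prop :=
  (∀ a b, DRel F G a b → G.p b ≤ F.p a) ∧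
  (∀ a b, a ∈ F.A → a - 1 ∈ F.A → b ∈ G.A → b - 1 ∈ G.A →
    (DRel F G a b ∨ DRel F G (a - 1) (b - 1)) →
    F.x a - F.x (a - 1) ≤ G.x b - G.x (b - 1))

/-- Cumulative distribution function of a discrete distribution. -/
noncomputable def DiscDist.cdf (D : DiscDist) (t : ℝ) : ℝ :=
  ∑' a : ℤ, if D.x a ≤ t then D.p a else 0

/-- Mean of a discrete distribution. -/
noncomputable def DiscDist.mean (D : DiscDist) : ℝ := ∑' a : ℤ, D.p a * D.x a

/-!
Couple `X ~ F` and `Y ~ G` comonotonically through their quantile functions and let `gap a` be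
`p_a` times the excess of `E[Y - E Y | X = x_a]` over `x_a - E X`; these gaps sum to zero.
The hypotheses `q_b ≤ p_a` and the spacing inequalities make the gaps single-crossing: once a gap
is nonnegative so is the next one, because the `G`-atom at the boundary between the blocks of `a`
and `a + 1` carries no more mass than either block, and the spacings of `G` next to it dominate
`x_{a+1} - x_a`. Within block `a`, the supporting line of `φ` at `u_a = x_a - E X` with slope
`φ'₊(u_a)` gives `p_a φ(u_a) + φ'₊(u_a) · gap a ≤ ∑_b coupling a b · φ(y_b - E Y)`.
As `φ'₊` is monotone and the gaps change sign once, all these slopes can be replaced by a single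
constant, and summing over `a` makes the gap terms vanish.
-/

open Filter Topology Set

lemma Monotone.hasSum_int_sub {f : ℤ → ℝ} (hf : Monotone f) {l u : ℝ}
    (hbot : Tendsto f atBot (𝓝 l)) (htop : Tendsto f atTop (𝓝 u)) :
    HasSum (fun n => f (n + 1) - f n) (u - l) := by
  have hnn : ∀ n : ℤ, 0 ≤ f (n + 1) - f n := fun n => sub_nonneg.2 (hf (by omega))
  have hpos : HasSum (fun n : ℕ => f (n + 1) - f n) (u - f 0) := by
    rw [hasSum_iff_tendsto_nat_of_nonneg (fun n => hnn n)]
    refine ((htop.comp tendsto_natCast_atTop_atTop).sub_const (f 0)).congr fun n => ?_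
    simpa using (Finset.sum_range_sub (fun i : ℕ => f i) n).symm
  have hneg : HasSum (fun n : ℕ => f (-(n + 1 : ℤ) + 1) - f (-(n + 1 : ℤ))) (f 0 - l) := by
    rw [hasSum_iff_tendsto_nat_of_nonneg (fun n => hnn _)]
    refine ((hbot.comp (tendsto_neg_atTop_atBot.comp tendsto_natCast_atTop_atTop)).const_sub
      (f 0)).congr fun n => ?_
    have e : ∀ i : ℕ, f (-(i + 1 : ℤ) + 1) - f (-(i + 1 : ℤ))
        = -f (-((i + 1 : ℕ) : ℤ)) - -f (-(i : ℤ)) := fun i => by push_cast; ring_nf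
    rw [Finset.sum_congr rfl fun i _ => e i, Finset.sum_range_sub (fun i : ℕ => -f (-(i : ℤ)))]
    simp only [Function.comp_apply, Nat.cast_zero, neg_zero]
    ring
  convert HasSum.of_nat_of_neg_add_one (f := fun n : ℤ => f (n + 1) - f n) hpos hneg using 1
  ring

lemma max_zero_min_sub_max_eq {c d u v : ℝ} (hcd : c ≤ d) (huv : u ≤ v) :
    max 0 (min d v - max c u) = max c (min d v) - max c (min d u) := by
  simp only [max_def, min_def]
  split_ifs <;> linarith

lemma hasSum_mul_le_of_le_off {ι : Type*} {c f : ι → ℝ} {P S m : ℝ} (β : ι)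
    (hc : ∀ i, 0 ≤ c i) (hP : HasSum c P) (hS : HasSum (fun i => c i * f i) S)
    (hf : ∀ i ≠ β, 0 < c i → f i ≤ m) : S ≤ P * m + c β * (f β - m) := by
  classical
  refine hasSum_le (fun i => ?_) hS ((hP.mul_right m).add (hasSum_ite_eq β (c β * (f β - m))))
  by_cases hi : i = β
  · rw [if_pos hi, hi, mul_sub]
    linarith
  · rw [if_neg hi, add_zero]
    rcases (hc i).lt_or_eq with h | h
    · exact mul_le_mul_of_nonneg_left (hf i hi h) h.le
    · simp [← h]

lemma le_hasSum_mul_of_le_off {ι : Type*} {c f : ι → ℝ} {P S m : ℝ} (β : ι)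
    (hc : ∀ i, 0 ≤ c i) (hP : HasSum c P) (hS : HasSum (fun i => c i * f i) S)
    (hf : ∀ i ≠ β, 0 < c i → m ≤ f i) : P * m + c β * (f β - m) ≤ S := by
  have := hasSum_mul_le_of_le_off (f := fun i => -f i) (m := -m) β hc hP
    (by simpa only [mul_neg] using hS.neg) fun i hi h => neg_le_neg (hf i hi h)
  linarith

lemma mul_add_mul_sub_le_of_hasSum {ι : Type*} {c y : ι → ℝ} {ψ : ℝ → ℝ} {x r P M Φ : ℝ}
    (hc : ∀ i, 0 ≤ c i) (hP : HasSum c P) (hM : HasSum (fun i => c i * y i) M)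
    (hΦ : HasSum (fun i => c i * ψ (y i)) Φ) (hψ : ∀ v, ψ x + r * (v - x) ≤ ψ v) :
    P * ψ x + r * (M - P * x) ≤ Φ := by
  have e : (fun i => c i * (ψ x + r * (y i - x)))
      = fun i => c i * (ψ x - r * x) + r * (c i * y i) := funext fun i => by ring
  refine hasSum_le (fun i => mul_le_mul_of_nonneg_left (hψ (y i)) (hc i)) ?_ hΦ
  rw [e, show P * ψ x + r * (M - P * x) = P * (ψ x - r * x) + r * M by ring]
  exact (hP.mul_right _).add (hM.mul_left r)

lemma ConvexOn.add_rightDeriv_mul_sub_le {φ : ℝ → ℝ} (hφ : ConvexOn ℝ univ φ) (x y : ℝ) :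
    φ x + derivWithin φ (Ioi x) x * (y - x) ≤ φ y := by
  rcases lt_trichotomy y x with hyx | rfl | hxy
  · have h := (hφ.slope_le_leftDeriv_of_mem_interior (mem_univ y) (by simp) hyx).trans
      (hφ.leftDeriv_le_rightDeriv_of_mem_interior (by simp))
    rw [slope_def_field, div_le_iff₀ (sub_pos.2 hyx)] at h
    linarith
  · simp
  · have h := hφ.rightDeriv_le_slope_of_mem_interior (by simp) (mem_univ y) hxy
    rw [slope_def_field, le_div_iff₀ (sub_pos.2 hxy)] at h
    linarith

lemma exists_mul_le_mul_of_single_crossing {D r : ℤ → ℝ} (hD : HasSum D 0)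
    (hcross : ∀ a a', a ≤ a' → 0 < D a → 0 ≤ D a') (hr : MonotoneOn r {a | D a ≠ 0}) :
    ∃ s, ∀ a, s * D a ≤ r a * D a := by
  by_cases hpos : ∃ a, 0 < D a
  swap
  · push Not at hpos
    have h := (hasSum_zero_iff_of_nonneg fun a => neg_nonneg.2 (hpos a)).1 (by simpa using hD.neg)
    exact ⟨0, fun a => by simp [neg_eq_zero.1 (congr_fun h a)]⟩
  by_cases hneg : ∃ a, D a < 0
  swap
  · push Not at hneg
    have h := (hasSum_zero_iff_of_nonneg hneg).1 hD
    exact ⟨0, fun a => by simp [h]⟩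
  obtain ⟨a₁, ha₁⟩ := hneg
  have hlt_of_neg : ∀ a a', D a < 0 → 0 < D a' → a < a' := fun a a' ha ha' =>
    lt_of_not_ge fun h => (hcross a' a h ha').not_gt ha
  obtain ⟨a₀, ha₀, hleast⟩ := Int.exists_least_of_bdd (P := fun a => 0 < D a)
    ⟨a₁, fun a ha => (hlt_of_neg a₁ a ha₁ ha).le⟩ hpos
  -- `D` is negative only before its first positive index `a₀`, so the slope there works.
  refine ⟨r a₀, fun a => ?_⟩
  rcases lt_trichotomy (D a) 0 with hDa | hDa | hDa
  · exact mul_le_mul_of_nonpos_right (hr hDa.ne ha₀.ne' (hlt_of_neg a a₀ hDa ha₀).le) hDa.le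
  · simp [hDa]
  · exact mul_le_mul_of_nonneg_right (hr ha₀.ne' hDa.ne' (hleast a hDa)) hDa.le

lemma mul_le_mul_sub_of_add_le {p p' w w' : ℝ} (hw : 0 ≤ w) (hw' : 0 ≤ w') (hp : w + w' ≤ p)
    (hp' : w + w' ≤ p') : p * w' ≤ p' * (p - w) := by
  rcases le_total p p' with h | h <;> nlinarith

namespace DiscDist

section Distribution

variable (D : DiscDist)

lemma p_nonneg (a : ℤ) : 0 ≤ D.p a := by
  by_cases h : a ∈ D.A
  · exact (D.hpos a h).le
  · exact (D.hzero a h).ge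

lemma monotoneOn_x : MonotoneOn D.x D.A := fun a ha b hb hab =>
  hab.eq_or_lt.elim (fun h => h ▸ le_rfl) fun h => (D.hmono a b ha hb h).le

lemma summable_ite_lt (a : ℤ) : Summable fun i : ℤ => if i < a then D.p i else 0 :=
  D.hsummable.of_nonneg_of_le (fun i => by split_ifs <;> simp [D.p_nonneg])
    (fun i => by split_ifs <;> simp [D.p_nonneg])

lemma L_succ (a : ℤ) : D.L (a + 1) = D.L a + D.p a := by
  unfold DiscDist.L
  rw [← ((D.summable_ite_lt a).hasSum.add (hasSum_ite_eq a (D.p a))).tsum_eq]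
  refine tsum_congr fun i => ?_
  rcases lt_trichotomy i a with h | rfl | h
  · simp [h, h.ne, show i < a + 1 by omega]
  · simp
  · simp [h.ne', show ¬i < a by omega, show ¬i < a + 1 by omega]

lemma monotone_L : Monotone D.L :=
  monotone_int_of_le_succ fun a => by rw [D.L_succ]; linarith [D.p_nonneg a]

lemma L_nonneg (a : ℤ) : 0 ≤ D.L a :=
  tsum_nonneg fun i => by split_ifs <;> simp [D.p_nonneg]

lemma tendsto_L_atTop : Tendsto D.L atTop (𝓝 1) := by
  have := tendsto_tsum_of_dominated_convergence (𝓕 := atTop)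
    (f := fun a i => if i < a then D.p i else 0) D.hsummable
    (fun i => tendsto_const_nhds.congr' <|
      (eventually_gt_atTop i).mono fun a ha => (if_pos ha).symm)
    (Eventually.of_forall fun a i => by
      split_ifs <;> simp [abs_of_nonneg (D.p_nonneg i), D.p_nonneg i])
  rwa [D.hsum] at this

lemma tendsto_L_atBot : Tendsto D.L atBot (𝓝 0) := by
  have := tendsto_tsum_of_dominated_convergence (𝓕 := atBot)
    (f := fun a i => if i < a then D.p i else 0) (g := 0) D.hsummable
    (fun i => tendsto_const_nhds.congr' <| (eventually_le_atBot i).mono fun a ha =>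
      (if_neg (not_lt.2 ha)).symm)
    (Eventually.of_forall fun a i => by
      split_ifs <;> simp [abs_of_nonneg (D.p_nonneg i), D.p_nonneg i])
  rw [show (0 : ℝ) = ∑' _ : ℤ, (0 : ℝ) by simp]
  exact this

lemma L_le_one (a : ℤ) : D.L a ≤ 1 := D.monotone_L.ge_of_tendsto D.tendsto_L_atTop a

lemma summable_mul_abs_sub_mean (hD : Summable fun a => D.p a * |D.x a|) :
    Summable fun a => D.p a * |D.x a - D.mean| :=
  (hD.add (D.hsummable.mul_right |D.mean|)).of_nonneg_of_le
    (fun a => mul_nonneg (D.p_nonneg a) (abs_nonneg _))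
    fun a => by rw [← mul_add]; exact mul_le_mul_of_nonneg_left (abs_sub _ _) (D.p_nonneg a)

lemma hasSum_mul_sub_mean (hD : Summable fun a => D.p a * |D.x a|) :
    HasSum (fun a => D.p a * (D.x a - D.mean)) 0 := by
  have h1 : HasSum (fun a => D.p a * D.x a) D.mean :=
    (hD.of_norm_bounded fun a => by
      rw [norm_mul, Real.norm_eq_abs, Real.norm_eq_abs, abs_of_nonneg (D.p_nonneg a)]).hasSum
  have h2 : HasSum (fun a => D.p a * D.mean) D.mean := by
    simpa [D.hsum] using D.hsummable.hasSum.mul_right D.mean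
  simpa [mul_sub] using h1.sub h2

variable {D}

lemma L_lt_L_succ {a : ℤ} (ha : a ∈ D.A) : D.L a < D.L (a + 1) := by
  rw [D.L_succ]; linarith [D.hpos a ha]

lemma mem_of_L_lt_L_succ {a : ℤ} (h : D.L a < D.L (a + 1)) : a ∈ D.A := by
  by_contra ha
  rw [D.L_succ, D.hzero a ha, add_zero] at h
  exact h.false

lemma L_succ_pos {a : ℤ} (ha : a ∈ D.A) : 0 < D.L (a + 1) :=
  (D.L_nonneg a).trans_lt (L_lt_L_succ ha)

lemma L_lt_one {a : ℤ} (ha : a ∈ D.A) : D.L a < 1 :=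
  (L_lt_L_succ ha).trans_le (D.L_le_one _)

lemma exists_mem_lt_of_L_pos {b : ℤ} (h : 0 < D.L b) : ∃ i ∈ D.A, i < b := by
  by_contra! hA
  have hzero : ∀ i, (if i < b then D.p i else 0) = 0 := fun i => by
    split_ifs with hi
    · exact D.hzero i fun hiA => (hA i hiA).not_gt hi
    · rfl
  simp [DiscDist.L, hzero] at h

lemma exists_mem_ge_of_L_lt_one {b : ℤ} (h : D.L b < 1) : ∃ i ∈ D.A, b ≤ i := by
  by_contra! hA
  have hall : ∀ i, (if i < b then D.p i else 0) = D.p i := fun i => by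
    split_ifs with hi
    · rfl
    · exact (D.hzero i fun hiA => hi (hA i hiA)).symm
  simp [DiscDist.L, hall, D.hsum] at h

lemma exists_L_le_lt_L_succ {t : ℝ} (h0 : 0 < t) (h1 : t < 1) :
    ∃ b, D.L b ≤ t ∧ t < D.L (b + 1) := by
  obtain ⟨N, hN⟩ := eventually_atTop.1 (D.tendsto_L_atTop.eventually (eventually_gt_nhds h1))
  obtain ⟨M, hM⟩ := eventually_atBot.1 (D.tendsto_L_atBot.eventually (eventually_lt_nhds h0))
  obtain ⟨b, hb, hmax⟩ := Int.exists_greatest_of_bdd (P := fun b => D.L b ≤ t)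
    ⟨N, fun z hz => le_of_not_gt fun hzN => (hN z hzN.le).not_ge hz⟩ ⟨M, (hM M le_rfl).le⟩
  exact ⟨b, hb, lt_of_not_ge fun h => (hmax (b + 1) h).not_gt (lt_add_one b)⟩

end Distribution

section Coupling

/-- The mass that the quantile (comonotone) coupling of `F` and `G` puts on `(F.x a, G.x b)`:
the length of `[F.L a, F.L (a + 1)] ∩ [G.L b, G.L (b + 1)]`. -/
noncomputable def coupling (F G : DiscDist) (a b : ℤ) : ℝ :=
  max 0 (min (F.L (a + 1)) (G.L (b + 1)) - max (F.L a) (G.L b))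

variable (F G : DiscDist)

lemma coupling_nonneg (a b : ℤ) : 0 ≤ coupling F G a b := le_max_left _ _

lemma coupling_comm (a b : ℤ) : coupling F G a b = coupling G F b a := by
  simp only [coupling, min_comm, max_comm]

lemma coupling_pos_iff {a b : ℤ} :
    0 < coupling F G a b ↔ max (F.L a) (G.L b) < min (F.L (a + 1)) (G.L (b + 1)) := by
  simp only [coupling, lt_max_iff, lt_self_iff_false, false_or, sub_pos]

lemma hasSum_coupling_right (a : ℤ) : HasSum (fun b => coupling F G a b) (F.p a) := by
  have hLa : F.L a ≤ F.L (a + 1) := F.monotone_L (lt_add_one a).le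
  have hclamp : Continuous fun t => max (F.L a) (min (F.L (a + 1)) t) := by fun_prop
  have h := Monotone.hasSum_int_sub (f := fun b => max (F.L a) (min (F.L (a + 1)) (G.L b)))
    (fun b b' hbb' => max_le_max le_rfl (min_le_min le_rfl (G.monotone_L hbb')))
    (by simpa [Function.comp_def, F.L_nonneg a] using (hclamp.tendsto 0).comp G.tendsto_L_atBot)
    (by simpa [Function.comp_def, F.L_le_one (a + 1), hLa] using
      (hclamp.tendsto 1).comp G.tendsto_L_atTop)
  rw [show F.L (a + 1) - F.L a = F.p a by rw [F.L_succ]; ring] at h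
  convert h using 2 with b
  exact max_zero_min_sub_max_eq hLa (G.monotone_L (lt_add_one b).le)

lemma hasSum_coupling_left (b : ℤ) : HasSum (fun a => coupling F G a b) (G.p b) := by
  simpa only [coupling_comm F G _ b] using hasSum_coupling_right G F b

lemma coupling_le_right (a b : ℤ) : coupling F G a b ≤ G.p b :=
  le_hasSum (hasSum_coupling_left F G b) a fun _ _ => coupling_nonneg F G _ _

lemma coupling_le_left (a b : ℤ) : coupling F G a b ≤ F.p a :=
  le_hasSum (hasSum_coupling_right F G a) b fun _ _ => coupling_nonneg F G _ _

lemma coupling_add_coupling_succ_le (a b : ℤ) :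
    coupling F G a b + coupling F G (a + 1) b ≤ G.p b := by
  simpa [Finset.sum_pair (show a ≠ a + 1 by omega)] using
    sum_le_hasSum {a, a + 1} (fun _ _ => coupling_nonneg F G _ _) (hasSum_coupling_left F G b)

lemma summable_coupling_mul {g : ℤ → ℝ} (hg : Summable fun b => G.p b * |g b|) (a : ℤ) :
    Summable fun b => coupling F G a b * g b :=
  hg.of_norm_bounded fun b => by
    rw [norm_mul, Real.norm_eq_abs, abs_of_nonneg (coupling_nonneg F G a b)]
    exact mul_le_mul_of_nonneg_right (coupling_le_right F G a b) (abs_nonneg _)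

lemma hasSum_tsum_coupling_mul {g : ℤ → ℝ} (hg : Summable fun b => G.p b * |g b|) :
    HasSum (fun a => ∑' b, coupling F G a b * g b) (∑' b, G.p b * g b) := by
  have habs : Summable fun z : ℤ × ℤ => coupling F G z.2 z.1 * |g z.1| := by
    refine (summable_prod_of_nonneg (f := fun z : ℤ × ℤ => coupling F G z.2 z.1 * |g z.1|)
      fun z => mul_nonneg (coupling_nonneg F G z.2 z.1) (abs_nonneg (g z.1))).2
      ⟨fun b => ((hasSum_coupling_left F G b).mul_right |g b|).summable,
        hg.congr fun b => ((hasSum_coupling_left F G b).mul_right |g b|).tsum_eq.symm⟩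
  have hS : Summable fun z : ℤ × ℤ => coupling F G z.1 z.2 * g z.2 := by
    refine habs.prod_symm.of_norm_bounded fun z => ?_
    rw [norm_mul, Real.norm_eq_abs, abs_of_nonneg (coupling_nonneg F G z.1 z.2)]
    rfl
  have hb := ((Equiv.prodComm ℤ ℤ).hasSum_iff.2 hS.hasSum).prod_fiberwise fun b =>
    (hasSum_coupling_left F G b).mul_right (g b)
  rw [hb.tsum_eq]
  exact hS.hasSum.prod_fiberwise fun a => (summable_coupling_mul F G hg a).hasSum

end Coupling

section Gap

variable {F G : DiscDist}

lemma drel_iff_coupling_pos {a b : ℤ} : DRel F G a b ↔ 0 < coupling F G a b := by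
  rw [coupling_pos_iff]
  refine ⟨fun h => h.2.2, fun h => ⟨F.mem_of_L_lt_L_succ ?_, G.mem_of_L_lt_L_succ ?_, h⟩⟩
  · exact (le_max_left _ _).trans_lt (h.trans_le (min_le_left _ _))
  · exact (le_max_right _ _).trans_lt (h.trans_le (min_le_right _ _))

lemma drel_of_lt {a b : ℤ} (ha : a ∈ F.A) (hb : b ∈ G.A) (h₁ : F.L a < G.L (b + 1))
    (h₂ : G.L b < F.L (a + 1)) : DRel F G a b :=
  ⟨ha, hb, max_lt (lt_min (L_lt_L_succ ha) h₁) (lt_min h₂ (L_lt_L_succ hb))⟩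

lemma _root_.DRel.lt {a b : ℤ} (h : DRel F G a b) : F.L a < G.L (b + 1) ∧ G.L b < F.L (a + 1) :=
  ⟨(le_max_left _ _).trans_lt (h.2.2.trans_le (min_le_right _ _)),
    (le_max_right _ _).trans_lt (h.2.2.trans_le (min_le_left _ _))⟩

/-- `p_a (E[Y - E Y | X = x_a] - (x_a - E X))` when `(X, Y)` follows the quantile coupling. -/
noncomputable def gap (F G : DiscDist) (a : ℤ) : ℝ :=
  ∑' b, coupling F G a b * (G.x b - G.mean) - F.p a * (F.x a - F.mean)

lemma hasSum_gap (hF : Summable fun a => F.p a * |F.x a|)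
    (hG : Summable fun b => G.p b * |G.x b|) : HasSum (gap F G) 0 := by
  have hM := hasSum_tsum_coupling_mul F G (G.summable_mul_abs_sub_mean hG)
  rw [(G.hasSum_mul_sub_mean hG).tsum_eq] at hM
  have hgap := hM.sub (F.hasSum_mul_sub_mean hF)
  rwa [sub_zero] at hgap

lemma mem_of_gap_ne_zero {a : ℤ} (h : gap F G a ≠ 0) : a ∈ F.A := by
  by_contra ha
  have hc : ∀ b, coupling F G a b = 0 := fun b =>
    le_antisymm ((coupling_le_left F G a b).trans (F.hzero a ha).le) (coupling_nonneg F G a b)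
  simp [gap, hc, F.hzero a ha] at h

section Step

variable {a β : ℤ}

lemma drel_of_L_lt (ha : a ∈ F.A) (hβ : G.L β < F.L (a + 1))
    (hβ' : F.L (a + 1) < G.L (β + 1)) : DRel F G a β :=
  drel_of_lt ha (G.mem_of_L_lt_L_succ (hβ.trans hβ'))
    ((F.monotone_L (lt_add_one a).le).trans_lt hβ') hβ

lemma drel_succ_of_L_le (ha1 : a + 1 ∈ F.A) (hβ : G.L β ≤ F.L (a + 1))
    (hβ' : F.L (a + 1) < G.L (β + 1)) : DRel F G (a + 1) β :=
  drel_of_lt ha1 (G.mem_of_L_lt_L_succ (hβ.trans_lt hβ')) hβ' (hβ.trans_lt (L_lt_L_succ ha1))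

lemma L_lt_L_of_L_le (h : discoA F G) (ha : a ∈ F.A) (hβ : G.L β ≤ F.L (a + 1))
    (hβ' : F.L (a + 1) < G.L (β + 1)) : F.L a < G.L β := by
  rcases hβ.lt_or_eq with hlt | heq
  · linarith [h.1 a β (drel_of_L_lt ha hlt hβ'), F.L_succ a, G.L_succ β]
  · exact heq ▸ L_lt_L_succ ha

lemma gap_le (h : discoA F G) (hG : Summable fun b => G.p b * |G.x b|) (ha : a ∈ F.A)
    (ha1 : a + 1 ∈ F.A) (hβ : G.L β ≤ F.L (a + 1)) (hβ' : F.L (a + 1) < G.L (β + 1)) :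
    gap F G a ≤ F.p a * (G.x β - G.mean - (F.x a - F.mean))
      - (F.p a - coupling F G a β) * (F.x (a + 1) - F.x a) := by
  have hLβ := L_lt_L_of_L_le h ha hβ hβ'
  have hβA : β ∈ G.A := G.mem_of_L_lt_L_succ (hβ.trans_lt hβ')
  obtain ⟨i, hiA, hi⟩ := G.exists_mem_lt_of_L_pos ((F.L_nonneg a).trans_lt hLβ)
  have hβ1A : β - 1 ∈ G.A := G.hAconn i _ β hiA hβA (by omega) (by omega)
  have hL1 : G.L (β - 1) < G.L β := by simpa using L_lt_L_succ hβ1A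
  have hsp : F.x (a + 1) - F.x a ≤ G.x β - G.x (β - 1) := by
    simpa using h.2 (a + 1) β (drel_succ_of_L_le ha1 hβ hβ')
      (by simpa using drel_of_lt ha hβ1A (by simpa using hLβ) (hL1.trans_le hβ))
  have hblock : ∀ b ≠ β, 0 < coupling F G a b → G.x b - G.mean ≤ G.x (β - 1) - G.mean := by
    intro b hbβ hb
    have hdrel := drel_iff_coupling_pos.2 hb
    have : b < β + 1 := G.monotone_L.reflect_lt (hdrel.lt.2.trans hβ')
    exact sub_le_sub_right (G.monotoneOn_x hdrel.2.1 hβ1A (by omega)) _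
  have hup := hasSum_mul_le_of_le_off β (coupling_nonneg F G a) (hasSum_coupling_right F G a)
    (summable_coupling_mul F G (G.summable_mul_abs_sub_mean hG) a).hasSum hblock
  have hw := mul_le_mul_of_nonneg_left hsp (sub_nonneg.2 (coupling_le_left F G a β))
  rw [gap]
  linarith

lemma le_gap_succ_of_L_lt (h : discoA F G) (hG : Summable fun b => G.p b * |G.x b|)
    (ha : a ∈ F.A) (ha1 : a + 1 ∈ F.A) (hβ : G.L β < F.L (a + 1))
    (hβ' : F.L (a + 1) < G.L (β + 1)) :
    F.p (a + 1) * (G.x β - G.mean - (F.x a - F.mean))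
      - coupling F G (a + 1) β * (F.x (a + 1) - F.x a) ≤ gap F G (a + 1) := by
  have hβA : β ∈ G.A := G.mem_of_L_lt_L_succ (hβ.trans hβ')
  have hβ'' : G.L (β + 1) < F.L (a + 1 + 1) := by
    linarith [h.1 (a + 1) β (drel_succ_of_L_le ha1 hβ.le hβ'), F.L_succ (a + 1), G.L_succ β]
  obtain ⟨i, hiA, hi⟩ := G.exists_mem_ge_of_L_lt_one (hβ''.trans_le (F.L_le_one _))
  have hβ1A : β + 1 ∈ G.A := G.hAconn β _ i hβA hiA (by omega) hi
  have hsp : F.x (a + 1) - F.x a ≤ G.x (β + 1) - G.x β := by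
    simpa using h.2 (a + 1) (β + 1) (drel_of_lt ha1 hβ1A (hβ'.trans (L_lt_L_succ hβ1A)) hβ'')
      (by simpa using drel_of_L_lt ha hβ hβ')
  have hblock : ∀ b ≠ β, 0 < coupling F G (a + 1) b →
      G.x (β + 1) - G.mean ≤ G.x b - G.mean := by
    intro b hbβ hb
    have hdrel := drel_iff_coupling_pos.2 hb
    have : β < b + 1 := G.monotone_L.reflect_lt (hβ.trans hdrel.lt.1)
    exact sub_le_sub_right (G.monotoneOn_x hβ1A hdrel.2.1 (by omega)) _
  have hlow := le_hasSum_mul_of_le_off β (coupling_nonneg F G (a + 1))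
    (hasSum_coupling_right F G (a + 1))
    (summable_coupling_mul F G (G.summable_mul_abs_sub_mean hG) (a + 1)).hasSum hblock
  have hw := mul_le_mul_of_nonneg_left hsp (sub_nonneg.2 (coupling_le_left F G (a + 1) β))
  rw [gap]
  linarith

lemma le_gap_succ_of_L_eq (hG : Summable fun b => G.p b * |G.x b|)
    (hβ : G.L β = F.L (a + 1)) (hβ' : F.L (a + 1) < G.L (β + 1)) :
    F.p (a + 1) * (G.x β - G.mean - (F.x a - F.mean))
      - F.p (a + 1) * (F.x (a + 1) - F.x a) ≤ gap F G (a + 1) := by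
  have hβA : β ∈ G.A := G.mem_of_L_lt_L_succ (hβ.trans_lt hβ')
  have hblock : ∀ b ≠ β, 0 < coupling F G (a + 1) b → G.x β - G.mean ≤ G.x b - G.mean := by
    intro b _ hb
    have hdrel := drel_iff_coupling_pos.2 hb
    have : β < b + 1 := G.monotone_L.reflect_lt (hβ.trans_lt hdrel.lt.1)
    exact sub_le_sub_right (G.monotoneOn_x hβA hdrel.2.1 (by omega)) _
  have hlow := le_hasSum_mul_of_le_off β (coupling_nonneg F G (a + 1))
    (hasSum_coupling_right F G (a + 1))
    (summable_coupling_mul F G (G.summable_mul_abs_sub_mean hG) (a + 1)).hasSum hblock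
  rw [gap]
  linarith

lemma gap_succ_nonneg (h : discoA F G) (hG : Summable fun b => G.p b * |G.x b|)
    (ha : a ∈ F.A) (ha1 : a + 1 ∈ F.A) (hgap : 0 ≤ gap F G a) : 0 ≤ gap F G (a + 1) := by
  -- `β` is the `G`-atom whose quantile interval contains the boundary `F.L (a + 1)` between the
  -- blocks of `a` and `a + 1`; it either straddles the boundary or starts exactly there.
  obtain ⟨β, hβ, hβ'⟩ := G.exists_L_le_lt_L_succ (L_succ_pos ha) (L_lt_one ha1)
  set w := coupling F G a β
  set Δ := F.x (a + 1) - F.x a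
  set c := G.x β - G.mean - (F.x a - F.mean)
  have hup : gap F G a ≤ F.p a * c - (F.p a - w) * Δ := gap_le h hG ha ha1 hβ hβ'
  obtain ⟨w', hw', hlow⟩ : ∃ w', F.p a * w' ≤ F.p (a + 1) * (F.p a - w) ∧
      F.p (a + 1) * c - w' * Δ ≤ gap F G (a + 1) := by
    rcases hβ.lt_or_eq with hlt | heq
    · have hsum := coupling_add_coupling_succ_le F G a β
      refine ⟨coupling F G (a + 1) β, mul_le_mul_sub_of_add_le (coupling_nonneg ..)
        (coupling_nonneg ..) ?_ ?_, le_gap_succ_of_L_lt h hG ha ha1 hlt hβ'⟩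
      · exact hsum.trans (h.1 a β (drel_of_L_lt ha hlt hβ'))
      · exact hsum.trans (h.1 (a + 1) β (drel_succ_of_L_le ha1 hβ hβ'))
    · have hw : w = 0 := by
        refine le_antisymm (max_le le_rfl (sub_nonpos.2 ?_)) (coupling_nonneg ..)
        exact (min_le_left _ _).trans (heq ▸ le_max_right _ _)
      exact ⟨F.p (a + 1), by rw [hw, sub_zero, mul_comm], le_gap_succ_of_L_eq hG heq hβ'⟩
  have hΔ : 0 ≤ Δ := sub_nonneg.2 (F.monotoneOn_x ha ha1 (by omega))
  have hpa := F.hpos a ha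
  have hc : (F.p a - w) * Δ ≤ F.p a * c := by linarith
  have key : 0 ≤ F.p a * gap F G (a + 1) := by
    nlinarith [mul_le_mul_of_nonneg_left hc (F.p_nonneg (a + 1)),
      mul_le_mul_of_nonneg_right hw' hΔ, mul_le_mul_of_nonneg_left hlow hpa.le]
  exact (mul_nonneg_iff_of_pos_left hpa).1 key

lemma gap_nonneg_of_le (h : discoA F G) (hG : Summable fun b => G.p b * |G.x b|) {a a' : ℤ}
    (haa' : a ≤ a') (ha : 0 < gap F G a) : 0 ≤ gap F G a' := by
  have hA := mem_of_gap_ne_zero ha.ne'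
  by_contra! ha'
  suffices ∀ n, a ≤ n → n ∈ F.A → 0 ≤ gap F G n from
    (this a' haa' (mem_of_gap_ne_zero ha'.ne)).not_gt ha'
  intro n hn
  induction n, hn using Int.leInduction with
  | base => exact fun _ => ha.le
  | succ n hn ih =>
    intro hn1
    have hnA := F.hAconn a n (n + 1) hA hn1 hn (by omega)
    exact gap_succ_nonneg h hG hnA hn1 (ih hnA)

end Step

end Gap

end DiscDist

/-- If `F ≼_∧ G` for distributions with finite means, then `F ≤_dil G`. -/
theorem stmt_14 (F G : DiscDist)
    (hF : Summable (fun a : ℤ => F.p a * |F.x a|))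
    (hG : Summable (fun b : ℤ => G.p b * |G.x b|))
    (h : discoA F G) :
    ∀ φ : ℝ → ℝ, ConvexOn ℝ Set.univ φ →
      Summable (fun a : ℤ => F.p a * |φ (F.x a - F.mean)|) →
      Summable (fun b : ℤ => G.p b * |φ (G.x b - G.mean)|) →
      ∑' a : ℤ, F.p a * φ (F.x a - F.mean) ≤
        ∑' b : ℤ, G.p b * φ (G.x b - G.mean) := by
  intro φ hφ hsF hsG
  have hr : MonotoneOn (fun a => derivWithin φ (Ioi (F.x a - F.mean)) (F.x a - F.mean))
      {a | F.gap G a ≠ 0} := fun a ha a' ha' haa' =>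
    hφ.monotoneOn_rightDeriv (by simp) (by simp)
      (sub_le_sub_right (F.monotoneOn_x (DiscDist.mem_of_gap_ne_zero ha)
        (DiscDist.mem_of_gap_ne_zero ha') haa') _)
  obtain ⟨s, hs⟩ := exists_mul_le_mul_of_single_crossing (DiscDist.hasSum_gap hF hG)
    (fun _ _ => DiscDist.gap_nonneg_of_le h hG) hr
  have hblock : ∀ a, F.p a * φ (F.x a - F.mean) + s * F.gap G a
      ≤ ∑' b, F.coupling G a b * φ (G.x b - G.mean) := fun a => by
    have hjensen := mul_add_mul_sub_le_of_hasSum (F.coupling_nonneg G a)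
      (F.hasSum_coupling_right G a)
      (F.summable_coupling_mul G (G.summable_mul_abs_sub_mean hG) a).hasSum
      (F.summable_coupling_mul G (g := fun b => φ (G.x b - G.mean)) hsG a).hasSum
      (hφ.add_rightDeriv_mul_sub_le (F.x a - F.mean))
    have hsa := hs a
    rw [DiscDist.gap] at hsa ⊢
    linarith
  have hpF : HasSum (fun a => F.p a * φ (F.x a - F.mean)) _ :=
    (hsF.of_norm_bounded fun a => by
      rw [norm_mul, Real.norm_eq_abs, Real.norm_eq_abs, abs_of_nonneg (F.p_nonneg a)]).hasSum
  simpa using hasSum_le hblock (hpF.add ((DiscDist.hasSum_gap hF hG).mul_left s))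
    (F.hasSum_tsum_coupling_mul G hsG)
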